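/- arXiv:1403.3319 — 5 statements merged into one kernel-verified Lean document; each statement's English description precedes it below -/
import Mathlib

section
/- For every integer n ≥ 0, the power series expansion of u_n(z) = (-1)^{n+1} (1-z)^n log(1-z) = ∑_{m=0}^∞ u_{n,m} z^m converges for |z| < 1, and the coefficients satisfy u_{n,m} > 0 for all m > n. -/
/-!
Since `u_n(z) = (z - 1)^n · (-log (1 - z))`, multiplying the binomial expansion of `(z - 1)^n`
with `-log (1 - z) = ∑ z^k / k` gives, for `m > n`,
`u_{n,m} = ∑_{j ≤ n} (-1)^(n-j) C(n,j) / (m - j)`. This is the `n`-th difference with step `-1`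
of `x ↦ 1/x` at `x = m`, which equals `n! / (m (m-1) ⋯ (m-n))` and is therefore positive.
-/

open Finset Polynomial FormalMultilinearSeries
open scoped NNReal Nat

theorem fwdDiff_iter_inv_eq {K : Type*} [Field K] (n : ℕ) {x : K}
    (hx : (descPochhammer K (n + 1)).eval x ≠ 0) :
    (fwdDiff (-1))^[n] (fun t : K ↦ t⁻¹) x = n ! / (descPochhammer K (n + 1)).eval x := by
  induction n generalizing x with
  | zero => simp
  | succ n ih =>
    have hleft : (descPochhammer K (n + 2)).eval x =
        x * (descPochhammer K (n + 1)).eval (x - 1) := by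
      simp [descPochhammer_succ_left, eval_comp]
    have hright : (descPochhammer K (n + 2)).eval x =
        (descPochhammer K (n + 1)).eval x * (x - (n + 1)) := by
      simpa using descPochhammer_succ_eval (n + 1) x
    obtain ⟨hx0, hPx1⟩ := mul_ne_zero_iff.mp (hleft ▸ hx)
    obtain ⟨hPx, hxn⟩ := mul_ne_zero_iff.mp (hright ▸ hx)
    rw [Function.iterate_succ_apply', fwdDiff, ← sub_eq_add_neg, ih hPx1, ih hPx, hright]
    field_simp
    push_cast [Nat.factorial_succ]
    linear_combination (-(n ! : K)) * hleft.symm.trans hright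

theorem hasFPowerSeriesOnBall_ofScalars_of_hasSum {𝕜 : Type*} [RCLike 𝕜] {f : 𝕜 → 𝕜}
    {c : ℕ → 𝕜} {R : ℝ≥0} (hR : 0 < R)
    (hf : ∀ y : 𝕜, ‖y‖ < R → HasSum (fun m ↦ c m * y ^ m) (f y)) :
    HasFPowerSeriesOnBall f (ofScalars 𝕜 c) 0 R where
  r_le := ENNReal.le_of_forall_nnreal_lt fun r hr ↦ by
    have hsum := hf (r : ℝ) (by simpa using hr)
    refine (ofScalars 𝕜 c).le_radius_of_tendsto (l := 0) ?_
    simpa [ofScalars_norm] using hsum.summable.tendsto_atTop_zero.norm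
  r_pos := by simpa using hR
  hasSum {y} hy := by
    rw [mem_eball_zero_iff] at hy
    simpa [ofScalars_apply_eq, mul_comm] using
      hf y (by simpa [enorm, ← NNReal.coe_lt_coe] using hy)

/-- The coefficient `((m - j : ℕ) : ℂ)⁻¹` vanishes for `m ≤ j` (truncated subtraction and
`0⁻¹ = 0`), as the coefficient of `z ^ m` in `z ^ j * ∑ z ^ k / k` should. -/
theorem hasSum_shifted_taylorSeries_neg_log {z : ℂ} (hz : ‖z‖ < 1) (j : ℕ) :
    HasSum (fun m : ℕ ↦ ((m - j : ℕ) : ℂ)⁻¹ * z ^ m) (z ^ j * -Complex.log (1 - z)) := by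
  have hshift : HasSum (fun k ↦ ((k + j - j : ℕ) : ℂ)⁻¹ * z ^ (k + j))
      (z ^ j * -Complex.log (1 - z)) :=
    ((Complex.hasSum_taylorSeries_neg_log hz).mul_left (z ^ j)).congr_fun fun k ↦ by
      rw [Nat.add_sub_cancel, pow_add]
      ring
  refine (add_left_injective j).hasSum_iff (fun m hm ↦ ?_) |>.mp hshift
  have hmj : m - j = 0 := by
    by_contra h
    exact hm ⟨m - j, by simp only; omega⟩
  simp [hmj]

/-- The Taylor coefficient `u_{n,m}`: the Cauchy product of the binomial coefficients
`(-1)^(n-j) C(n,j)` of `(z - 1)^n` with the series of `-log (1 - z)`. -/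
noncomputable def uCoeff (n m : ℕ) : ℂ :=
  ∑ j ∈ range (n + 1), (-1) ^ (n - j) * n.choose j * ((m - j : ℕ) : ℂ)⁻¹

theorem hasSum_uCoeff_mul_pow (n : ℕ) {z : ℂ} (hz : ‖z‖ < 1) :
    HasSum (fun m ↦ uCoeff n m * z ^ m)
      ((-1) ^ (n + 1) * (1 - z) ^ n * Complex.log (1 - z)) := by
  have hbinom : (z - 1) ^ n = ∑ j ∈ range (n + 1), z ^ j * (-1) ^ (n - j) * n.choose j := by
    rw [sub_eq_add_neg, add_pow]
  have hvalue : (-1) ^ (n + 1) * (1 - z) ^ n * Complex.log (1 - z) =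
      ∑ j ∈ range (n + 1), (-1) ^ (n - j) * n.choose j * (z ^ j * -Complex.log (1 - z)) := by
    calc (-1) ^ (n + 1) * (1 - z) ^ n * Complex.log (1 - z)
        = (-1 * (1 - z)) ^ n * -Complex.log (1 - z) := by rw [mul_pow]; ring
      _ = _ := by
        rw [neg_one_mul, neg_sub, hbinom, sum_mul]
        exact sum_congr rfl fun j _ ↦ by ring
  rw [hvalue]
  refine (hasSum_sum fun j _ ↦
    (hasSum_shifted_taylorSeries_neg_log hz j).mul_left _).congr_fun fun m ↦ ?_
  rw [uCoeff, sum_mul]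
  exact sum_congr rfl fun j _ ↦ by ring

theorem uCoeff_eq_factorial_div_descFactorial {n m : ℕ} (h : n < m) :
    uCoeff n m = n ! / m.descFactorial (n + 1) := by
  have hP := descPochhammer_eval_eq_descFactorial ℂ m (n + 1)
  have hne : (m.descFactorial (n + 1) : ℂ) ≠ 0 :=
    Nat.cast_ne_zero.mpr (Nat.descFactorial_pos.mpr h).ne'
  rw [← hP, ← fwdDiff_iter_inv_eq n (hP ▸ hne), fwdDiff_iter_eq_sum_shift, uCoeff]
  refine sum_congr rfl fun j hj ↦ ?_
  rw [Nat.cast_sub (by rw [mem_range] at hj; omega), zsmul_eq_mul, nsmul_eq_mul]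
  push_cast
  ring

/-- For every integer `n ≥ 0`, the function `u_n(z) = (-1)^(n+1) (1-z)^n log(1-z)` has a
power series expansion converging on the unit disk, whose coefficients `u_{n,m}` are
(real and) positive for all `m > n`. -/
theorem stmt_0 (n : ℕ) :
    ∃ p : FormalMultilinearSeries ℂ ℂ ℂ,
      HasFPowerSeriesOnBall
        (fun z : ℂ => (-1 : ℂ) ^ (n + 1) * (1 - z) ^ n * Complex.log (1 - z)) p 0 1 ∧
      ∀ m : ℕ, n < m → (p.coeff m).im = 0 ∧ 0 < (p.coeff m).re := by
  refine ⟨ofScalars ℂ (uCoeff n), ?_, fun m hm ↦ ?_⟩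
  · simpa using hasFPowerSeriesOnBall_ofScalars_of_hasSum (R := 1) one_pos
      fun z hz ↦ hasSum_uCoeff_mul_pow n (by simpa using hz)
  have hreal : uCoeff n m = ((n ! / m.descFactorial (n + 1) : ℝ) : ℂ) := by
    rw [uCoeff_eq_factorial_div_descFactorial hm]
    push_cast
    rfl
  have hpos := Nat.descFactorial_pos.mpr hm
  rw [coeff_ofScalars, hreal, Complex.ofReal_im, Complex.ofReal_re]
  exact ⟨rfl, by positivity⟩
end

section
/- Let N ≥ 0 be an integer, d ≥ 2, and let φ be a continuous function on the unit sphere S^{d-1} ⊂ ℝ^d such that ∫_{S^{d-1}} (u·ξ)^N φ(ξ) dξ = 0 for every u ∈ ℝ^d. Then ∫_{S^{d-1}} p(ξ) φ(ξ) dξ = 0 for every homogeneous polynomial p of degree N on ℝ^d. -/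
/-!
Every homogeneous polynomial of degree `N` is a linear combination of the powers `⟨u, x⟩ ^ N`.
Writing a monomial as `x_{i_1} ⋯ x_{i_N}`, this is the polarization identity
`∑_{S ⊆ [N]} (-1)^{N - |S|} (∑_{j ∈ S} y_j)^N = N! y_1 ⋯ y_N` with `y_j = x_{i_j}`,
and `∑_{j ∈ S} x_{i_j} = ⟨∑_{j ∈ S} e_{i_j}, x⟩`. Integration against `φ` is linear on
continuous functions, so it vanishes on this span.
-/

open MeasureTheory Finset

theorem Finset.sum_superset_neg_one_pow_card_compl {α R : Type*} [Fintype α] [DecidableEq α]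
    [Ring R] (T : Finset α) :
    ∑ S with T ⊆ S, (-1 : R) ^ #Sᶜ = if T = univ then 1 else 0 := by
  have hcompl : ∑ S with T ⊆ S, (-1 : R) ^ #Sᶜ = ∑ S ∈ Tᶜ.powerset, (-1 : R) ^ #S :=
    sum_nbij' compl compl (by simp) (by simp [subset_compl_comm]) (by simp) (by simp) (by simp)
  have := congrArg (Int.cast : ℤ → R) (sum_powerset_neg_one_pow_card (x := Tᶜ))
  push_cast at this
  simpa [hcompl] using this

theorem Finset.sum_neg_one_pow_card_compl_mul_sum_pow {ι R : Type*} [Fintype ι] [DecidableEq ι]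
    [CommRing R] (y : ι → R) :
    ∑ S : Finset ι, (-1 : R) ^ #Sᶜ * (∑ j ∈ S, y j) ^ Fintype.card ι =
      (Fintype.card ι).factorial * ∏ j, y j := by
  calc ∑ S : Finset ι, (-1 : R) ^ #Sᶜ * (∑ j ∈ S, y j) ^ Fintype.card ι
      = ∑ S : Finset ι, ∑ g : ι → ι,
          if univ.image g ⊆ S then (-1 : R) ^ #Sᶜ * ∏ i, y (g i) else 0 := by
        refine sum_congr rfl fun S _ => ?_
        have hpow : (∑ j ∈ S, y j) ^ Fintype.card ι = ∏ _i : ι, ∑ j ∈ S, y j := by simp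
        rw [hpow, prod_univ_sum, mul_sum, ← sum_filter]
        refine sum_congr ?_ fun g _ => rfl
        ext g
        simp [Fintype.mem_piFinset, image_subset_iff]
    _ = ∑ g : ι → ι, (∏ i, y (g i)) * ∑ S with univ.image g ⊆ S, (-1 : R) ^ #Sᶜ := by
        rw [sum_comm]
        refine sum_congr rfl fun g _ => ?_
        rw [mul_sum, sum_filter]
        exact sum_congr rfl fun S _ => by split_ifs <;> ring
    -- inclusion–exclusion over `S` kills every non-surjective `g`
    _ = ∑ g : ι → ι with Function.Surjective g, ∏ i, y (g i) := by
        rw [sum_filter]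
        refine sum_congr rfl fun g _ => ?_
        rw [sum_superset_neg_one_pow_card_compl, mul_ite, mul_one, mul_zero]
        exact if_congr (by simp [eq_univ_iff_forall, Function.Surjective]) rfl rfl
    _ = ∑ e : Equiv.Perm ι, ∏ i, y (e i) :=
        (sum_bij (fun (e : Equiv.Perm ι) _ => (e : ι → ι)) (by simp [Equiv.surjective])
          (fun _ _ _ _ h => DFunLike.coe_injective h)
          (fun g hg => ⟨Equiv.ofBijective g
            (Finite.surjective_iff_bijective.1 (mem_filter.1 hg).2), mem_univ _, rfl⟩)
          (fun _ _ => rfl)).symm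
    _ = (Fintype.card ι).factorial * ∏ j, y j := by
        simp [Equiv.prod_comp, Fintype.card_perm]

namespace MvPolynomial

theorem eval_monomial_one_eq_prod_toMultiset {σ R : Type*} [DecidableEq σ] [CommSemiring R]
    (s : σ →₀ ℕ) (x : σ → R) :
    eval x (monomial s 1) = ∏ j : s.toMultiset.ToType, x j := by
  rw [eval_monomial, one_mul, prod_eq_multiset_prod, Multiset.map_univ, Finsupp.toMultiset_map,
    Finsupp.prod_toMultiset, Finsupp.prod_mapDomain_index pow_zero pow_add]

theorem eval_monomial_one_mem_span_pow_inner {X σ : Type*} [Fintype σ]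
    (v : X → EuclideanSpace ℝ σ) (s : σ →₀ ℕ) :
    (fun ξ => eval (v ξ) (monomial s 1)) ∈
      Submodule.span ℝ (Set.range fun (u : EuclideanSpace ℝ σ) (ξ : X) =>
        inner ℝ u (v ξ) ^ s.degree) := by
  classical
  have hcard : Fintype.card s.toMultiset.ToType = s.degree := by
    simp [Finsupp.degree_apply, Finsupp.sum]
  let u : Finset s.toMultiset.ToType → EuclideanSpace ℝ σ :=
    fun S => ∑ j ∈ S, EuclideanSpace.single (j : σ) 1
  have hu : ∀ S x, inner ℝ (u S) x = ∑ j ∈ S, x j := by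
    simp [u, sum_inner, EuclideanSpace.inner_single_left]
  have hpolar : (fun ξ => eval (v ξ) (monomial s 1)) = ∑ S : Finset s.toMultiset.ToType,
      (((Fintype.card s.toMultiset.ToType).factorial : ℝ)⁻¹ * (-1) ^ #Sᶜ) •
        fun ξ => inner ℝ (u S) (v ξ) ^ s.degree := by
    funext ξ
    simp only [Finset.sum_apply, Pi.smul_apply, smul_eq_mul, hu,
      eval_monomial_one_eq_prod_toMultiset, ← hcard, mul_assoc, ← mul_sum,
      sum_neg_one_pow_card_compl_mul_sum_pow]
    field_simp
  rw [hpolar]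
  exact Submodule.sum_mem _ fun S _ => Submodule.smul_mem _ _ (Submodule.subset_span ⟨u S, rfl⟩)

theorem IsHomogeneous.eval_mem_span_pow_inner {X σ : Type*} [Fintype σ] {p : MvPolynomial σ ℝ}
    {N : ℕ} (hp : p.IsHomogeneous N) (v : X → EuclideanSpace ℝ σ) :
    (fun ξ => eval (v ξ) p) ∈
      Submodule.span ℝ (Set.range fun (u : EuclideanSpace ℝ σ) (ξ : X) =>
        inner ℝ u (v ξ) ^ N) := by
  have hexpand : (fun ξ => eval (v ξ) p) =
      ∑ s ∈ p.support, coeff s p • fun ξ => eval (v ξ) (monomial s 1) := by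
    funext ξ
    conv_lhs => rw [p.as_sum]
    simp only [map_sum, eval_monomial, Finset.sum_apply, Pi.smul_apply, smul_eq_mul, one_mul]
  rw [hexpand]
  refine Submodule.sum_mem _ fun s hs => Submodule.smul_mem _ _ ?_
  have hdeg : s.degree = N := by
    rw [Finsupp.degree_eq_weight_one]
    exact hp (mem_support_iff.1 hs)
  exact hdeg ▸ eval_monomial_one_mem_span_pow_inner v s

end MvPolynomial

theorem integral_ofReal_mul_eq_zero_of_mem_span {X ι : Type*} [TopologicalSpace X] [CompactSpace X]
    [MeasurableSpace X] [OpensMeasurableSpace X] {μ : Measure X} [IsFiniteMeasure μ]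
    {φ : X → ℂ} (hφ : Continuous φ) {F : ι → X → ℝ} (hF : ∀ i, Continuous (F i))
    (hF0 : ∀ i, ∫ x, (F i x : ℂ) * φ x ∂μ = 0) {g : X → ℝ}
    (hg : g ∈ Submodule.span ℝ (Set.range F)) : ∫ x, (g x : ℂ) * φ x ∂μ = 0 := by
  have hint : ∀ {f : X → ℝ}, Continuous f → Integrable (fun x => (f x : ℂ) * φ x) μ :=
    fun hf => ((Complex.continuous_ofReal.comp hf).mul hφ).integrable_of_hasCompactSupport
      (HasCompactSupport.of_compactSpace _)
  suffices Continuous g ∧ ∫ x, (g x : ℂ) * φ x ∂μ = 0 from this.2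
  induction hg using Submodule.span_induction with
  | mem f hf =>
    obtain ⟨i, rfl⟩ := hf
    exact ⟨hF i, hF0 i⟩
  | zero => exact ⟨continuous_zero, by simp⟩
  | add f f' _ _ hf hf' =>
    refine ⟨hf.1.add hf'.1, ?_⟩
    simp only [Pi.add_apply, Complex.ofReal_add, add_mul]
    rw [integral_add (hint hf.1) (hint hf'.1), hf.2, hf'.2, add_zero]
  | smul c f _ hf =>
    refine ⟨hf.1.const_smul c, ?_⟩
    simp only [Pi.smul_apply, smul_eq_mul, Complex.ofReal_mul, mul_assoc]
    rw [integral_const_mul, hf.2, mul_zero]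

theorem stmt_4_general (d N : ℕ)
    (φ : Metric.sphere (0 : EuclideanSpace ℝ (Fin d)) 1 → ℂ) (hφ : Continuous φ)
    (h : ∀ u : EuclideanSpace ℝ (Fin d),
      (∫ ξ : Metric.sphere (0 : EuclideanSpace ℝ (Fin d)) 1,
        (((inner ℝ u (ξ : EuclideanSpace ℝ (Fin d)) : ℝ) : ℂ)) ^ N * φ ξ
        ∂(Measure.toSphere (volume : Measure (EuclideanSpace ℝ (Fin d))))) = 0) :
    ∀ p : MvPolynomial (Fin d) ℝ, p.IsHomogeneous N →
      (∫ ξ : Metric.sphere (0 : EuclideanSpace ℝ (Fin d)) 1,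
        ((MvPolynomial.eval (fun i => (ξ : EuclideanSpace ℝ (Fin d)) i) p : ℝ) : ℂ) * φ ξ
        ∂(Measure.toSphere (volume : Measure (EuclideanSpace ℝ (Fin d))))) = 0 := by
  intro p hp
  refine integral_ofReal_mul_eq_zero_of_mem_span hφ
    (fun _ => (continuous_const.inner continuous_subtype_val).pow N) (fun u => ?_)
    (hp.eval_mem_span_pow_inner Subtype.val)
  simpa using h u

/-- If a continuous function `φ` on the unit sphere `S^{d-1} ⊂ ℝ^d` satisfies
`∫ (u·ξ)^N φ(ξ) dξ = 0` for every `u ∈ ℝ^d`, then `∫ p(ξ) φ(ξ) dξ = 0` for every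
homogeneous polynomial `p` of degree `N` on `ℝ^d`. -/
theorem stmt_4 (d N : ℕ) (hd : 2 ≤ d)
    (φ : Metric.sphere (0 : EuclideanSpace ℝ (Fin d)) 1 → ℂ) (hφ : Continuous φ)
    (h : ∀ u : EuclideanSpace ℝ (Fin d),
      (∫ ξ : Metric.sphere (0 : EuclideanSpace ℝ (Fin d)) 1,
        (((inner ℝ u (ξ : EuclideanSpace ℝ (Fin d)) : ℝ) : ℂ)) ^ N * φ ξ
        ∂(Measure.toSphere (volume : Measure (EuclideanSpace ℝ (Fin d))))) = 0) :
    ∀ p : MvPolynomial (Fin d) ℝ, p.IsHomogeneous N →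
      (∫ ξ : Metric.sphere (0 : EuclideanSpace ℝ (Fin d)) 1,
        ((MvPolynomial.eval (fun i => (ξ : EuclideanSpace ℝ (Fin d)) i) p : ℝ) : ℂ) * φ ξ
        ∂(Measure.toSphere (volume : Measure (EuclideanSpace ℝ (Fin d))))) = 0 :=
  stmt_4_general d N φ hφ h
end

section
/- Let μ ∈ ℂ not be a non-negative integer, and let φ be a continuous function on the unit sphere S^{d-1} ⊂ ℝ^d such that ∫_{S^{d-1}} (1 - ∑_{j=1}^d u_j ξ_j)^μ φ(ξ) dξ = 0 for all u = (u_1,…,u_d) ∈ ℂ^d with ∑_j |u_j|² < 1. Then φ = 0. -/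
/-!
For `s = ∑ v_j ξ_j`, the function `t ↦ ∫ (1 - t s)^μ φ` vanishes near `t = 0`, and its `n`-th
derivative at `0` is `(-1)^n μ (μ - 1) ⋯ (μ - n + 1) ∫ s^n φ`. As `μ ∉ ℕ`, `φ` is orthogonal to
every power of a linear form, hence (expanding `(v · ξ)^n` and comparing coefficients in `v`) to
every monomial, hence by Stone–Weierstrass to every continuous function, in particular to `φ̄`.
-/

open MeasureTheory Metric Filter

lemma exists_norm_cpow_le_of_mem_closedBall {ρ : ℝ} (hρ : ρ < 1) (c : ℂ) :
    ∃ B, ∀ z ∈ closedBall (1 : ℂ) ρ, ‖z ^ c‖ ≤ B :=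
  (isCompact_closedBall 1 ρ).exists_bound_of_continuousOn fun _ hz =>
    (continuousAt_cpow_const <| Complex.ball_one_subset_slitPlane <|
      mem_ball.2 <| (mem_closedBall.1 hz).trans_lt hρ).continuousWithinAt

section OneSubMulCpow

variable {X : Type*} [MeasurableSpace X] {ν : Measure X} {s ψ : X → ℂ} {M : ℝ}

lemma hasDerivAt_integral_one_sub_mul_cpow_mul (hs : AEMeasurable s ν) (hsM : ∀ x, ‖s x‖ ≤ M)
    (hψ : Integrable ψ ν) (c : ℂ) {t : ℂ} (ht : ‖t‖ * M < 1) :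
    HasDerivAt (fun t => ∫ x, (1 - t * s x) ^ c * ψ x ∂ν)
      (-c * ∫ x, (1 - t * s x) ^ (c - 1) * (s x * ψ x) ∂ν) t := by
  obtain ⟨ρ, htρ, hρ⟩ := exists_between ht
  obtain ⟨ε, hε, hball⟩ := eventually_nhds_iff_ball.1 <|
    (continuous_norm.mul continuous_const).continuousAt.eventually (gt_mem_nhds htρ)
  have hmem : ∀ y ∈ ball t ε, ∀ x, 1 - y * s x ∈ closedBall (1 : ℂ) ρ := fun y hy x => by
    rw [mem_closedBall, dist_eq_norm, sub_sub_cancel_left, norm_neg, norm_mul]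
    exact (mul_le_mul_of_nonneg_left (hsM x) (norm_nonneg y)).trans (hball y hy).le
  have hslit : ∀ y ∈ ball t ε, ∀ x, 1 - y * s x ∈ Complex.slitPlane := fun y hy x =>
    Complex.ball_one_subset_slitPlane <| mem_ball.2 <| (mem_closedBall.1 (hmem y hy x)).trans_lt hρ
  obtain ⟨B₀, hB₀⟩ := exists_norm_cpow_le_of_mem_closedBall hρ c
  obtain ⟨B, hB⟩ := exists_norm_cpow_le_of_mem_closedBall hρ (c - 1)
  have hmeas : ∀ y e : ℂ, AEStronglyMeasurable (fun x => (1 - y * s x) ^ e) ν := fun y e =>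
    (((hs.const_mul y).const_sub 1).pow_const e).aestronglyMeasurable
  have hsψ : Integrable (fun x => s x * ψ x) ν :=
    hψ.bdd_mul hs.aestronglyMeasurable (ae_of_all _ hsM)
  have hderiv := hasDerivAt_integral_of_dominated_loc_of_deriv_le
    (F := fun y x => (1 - y * s x) ^ c * ψ x)
    (F' := fun y x => -c * ((1 - y * s x) ^ (c - 1) * (s x * ψ x)))
    (bound := fun x => ‖c‖ * (B * ‖s x * ψ x‖)) (ball_mem_nhds t hε)
    (Eventually.of_forall fun y => (hmeas y c).mul hψ.1)
    (hψ.bdd_mul (hmeas t c) (ae_of_all _ fun x => hB₀ _ (hmem t (mem_ball_self hε) x)))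
    (((hmeas t (c - 1)).mul hsψ.1).const_mul _)
    (ae_of_all _ fun x y hy => ?_) (hsψ.norm.const_mul B |>.const_mul _)
    (ae_of_all _ fun x y hy => ?_)
  · simpa only [integral_const_mul] using hderiv.2
  · rw [norm_mul, norm_neg, norm_mul]
    gcongr
    exact hB _ (hmem y hy x)
  · have hinner : HasDerivAt (fun y => 1 - y * s x) (-s x) y := by
      simpa using (hasDerivAt_mul_const (s x)).const_sub 1
    exact ((hinner.cpow_const (hslit y hy x)).mul_const (ψ x)).congr_deriv (by ring)

lemma integral_pow_mul_eq_zero_of_integral_one_sub_mul_cpow (hs : AEMeasurable s ν)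
    (hsM : ∀ x, ‖s x‖ ≤ M) (hψ : Integrable ψ ν) {c : ℂ} (hc : ∀ k : ℕ, c ≠ k)
    (h : ∀ t : ℂ, ‖t‖ * M < 1 → ∫ x, (1 - t * s x) ^ c * ψ x ∂ν = 0) (n : ℕ) :
    ∫ x, s x ^ n * ψ x ∂ν = 0 := by
  have hU : IsOpen {t : ℂ | ‖t‖ * M < 1} := isOpen_lt (by fun_prop) continuous_const
  -- up to the factor `∏ k < n, (k - c) ≠ 0`, this is the `n`-th derivative of the integral in `h`
  suffices key : ∀ n : ℕ, ∀ t : ℂ, ‖t‖ * M < 1 →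
      ∫ x, (1 - t * s x) ^ (c - n) * (s x ^ n * ψ x) ∂ν = 0 by
    simpa using key n 0 (by simp)
  intro n
  induction n with
  | zero => simpa using h
  | succ n ih =>
    intro t ht
    have hsnψ : Integrable (fun x => s x ^ n * ψ x) ν :=
      hψ.bdd_mul (hs.pow_const n).aestronglyMeasurable
        (ae_of_all _ fun x => by rw [norm_pow]; exact pow_le_pow_left₀ (norm_nonneg _) (hsM x) n)
    have hderiv := hasDerivAt_integral_one_sub_mul_cpow_mul hs hsM hsnψ (c - n) ht
    have hzero : HasDerivAt (fun t => ∫ x, (1 - t * s x) ^ (c - n) * (s x ^ n * ψ x) ∂ν) 0 t :=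
      (hasDerivAt_const t (0 : ℂ)).congr_of_eventuallyEq <|
        eventually_of_mem (hU.mem_nhds ht) ih
    have hcn : -(c - n) ≠ 0 := neg_ne_zero.2 (sub_ne_zero.2 (hc n))
    have := (mul_eq_zero.1 (hderiv.unique hzero)).resolve_left hcn
    convert this using 4 with x
    · push_cast; rw [sub_sub]
    · ring

end OneSubMulCpow

theorem eq_zero_of_forall_sum_prod_pow_mul_eq_zero {R ι : Type*} [CommRing R] [IsDomain R]
    [Infinite R] [Fintype ι] {S : Finset (ι → ℕ)} {a : (ι → ℕ) → R}
    (h : ∀ v : ι → R, ∑ m ∈ S, (∏ i, v i ^ m i) * a m = 0) {k : ι → ℕ} (hk : k ∈ S) :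
    a k = 0 := by
  classical
  set P : MvPolynomial ι R :=
    ∑ m ∈ S, MvPolynomial.monomial (Finsupp.equivFunOnFinite.symm m) (a m)
  have hP : P = 0 := MvPolynomial.funext fun v => by
    simpa [P, MvPolynomial.eval_monomial, Finsupp.prod_fintype, mul_comm] using h v
  have := congrArg (MvPolynomial.coeff (Finsupp.equivFunOnFinite.symm k)) hP
  simpa [P, MvPolynomial.coeff_sum, MvPolynomial.coeff_monomial, hk] using this

lemma integral_prod_pow_mul_eq_zero_of_integral_sum_pow_mul_eq_zero {X ι : Type*}
    [MeasurableSpace X] {ν : Measure X} [Fintype ι] {y : ι → X → ℂ} {ψ : X → ℂ}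
    (hint : ∀ k : ι → ℕ, Integrable (fun x => (∏ i, y i x ^ k i) * ψ x) ν)
    (h : ∀ (v : ι → ℂ) (n : ℕ), ∫ x, (∑ i, v i * y i x) ^ n * ψ x ∂ν = 0) (k : ι → ℕ) :
    ∫ x, (∏ i, y i x ^ k i) * ψ x ∂ν = 0 := by
  classical
  have hexpand : ∀ (v : ι → ℂ) (n : ℕ), ∫ x, (∑ i, v i * y i x) ^ n * ψ x ∂ν =
      ∑ m ∈ Finset.univ.piAntidiag n, (∏ i, v i ^ m i) *
        ((Nat.multinomial Finset.univ m : ℂ) * ∫ x, (∏ i, y i x ^ m i) * ψ x ∂ν) := by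
    intro v n
    have hpt : ∀ x, (∑ i, v i * y i x) ^ n * ψ x = ∑ m ∈ Finset.univ.piAntidiag n,
        ((∏ i, v i ^ m i) * Nat.multinomial Finset.univ m) * ((∏ i, y i x ^ m i) * ψ x) := by
      intro x
      simp only [Finset.sum_pow_eq_sum_piAntidiag, Finset.sum_mul, mul_pow,
        Finset.prod_mul_distrib]
      exact Finset.sum_congr rfl fun m _ => by ring
    simp only [hpt, mul_assoc]
    rw [integral_finsetSum _ fun m _ => ((hint m).const_mul _).const_mul _]
    simp only [integral_const_mul]
  have := eq_zero_of_forall_sum_prod_pow_mul_eq_zero (fun v => (hexpand v _).symm.trans (h v _))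
    (Finset.mem_piAntidiag.2 ⟨rfl, fun i _ => Finset.mem_univ i⟩) (k := k)
  exact (mul_eq_zero.1 this).resolve_left (Nat.cast_ne_zero.2 (Nat.multinomial_pos _ _).ne')

lemma norm_sum_mul_le_sum_norm {ι : Type*} [Fintype ι] (v w : ι → ℂ) (hw : ∀ i, ‖w i‖ ≤ 1) :
    ‖∑ i, v i * w i‖ ≤ ∑ i, ‖v i‖ :=
  (norm_sum_le _ _).trans <| Finset.sum_le_sum fun i _ => by
    simpa [norm_mul] using mul_le_mul_of_nonneg_left (hw i) (norm_nonneg (v i))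

lemma sum_norm_mul_sq_lt_one {ι : Type*} [Fintype ι] {t : ℂ} {v : ι → ℂ}
    (ht : ‖t‖ * ∑ i, ‖v i‖ < 1) : ∑ i, ‖t * v i‖ ^ 2 < 1 := calc
  ∑ i, ‖t * v i‖ ^ 2 ≤ (∑ i, ‖t * v i‖) ^ 2 :=
    Finset.sum_sq_le_sq_sum_of_nonneg fun i _ => norm_nonneg _
  _ = (‖t‖ * ∑ i, ‖v i‖) ^ 2 := by simp [Finset.mul_sum]
  _ < 1 := by
    have : 0 ≤ ‖t‖ * ∑ i, ‖v i‖ := by positivity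
    nlinarith

section Density

variable {X : Type*} [TopologicalSpace X] [CompactSpace X] [MeasurableSpace X] [BorelSpace X]
  {ν : Measure X} [IsFiniteMeasure ν] {φ : X → ℂ}

omit [BorelSpace X] in
lemma Continuous.integrable_of_compactSpace [OpensMeasurableSpace X] {E : Type*}
    [NormedAddCommGroup E] {f : X → E} (hf : Continuous f) : Integrable f ν :=
  hf.integrable_of_hasCompactSupport (.of_compactSpace f)

lemma continuous_integral_ofReal_mul (hφ : Continuous φ) :
    Continuous fun f : C(X, ℝ) => ∫ x, (f x : ℂ) * φ x ∂ν := by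
  have hint : Continuous fun g : C(X, ℂ) => ∫ x, g x ∂ν :=
    (continuous_integral.comp (ContinuousMap.toLp 1 ν ℂ).continuous).congr fun g =>
      integral_congr_ae (ContinuousMap.coeFn_toLp ν g)
  exact hint.comp ((ContinuousMap.continuous_postcomp ⟨_, Complex.continuous_ofReal⟩).mul
    (continuous_const (y := ⟨φ, hφ⟩)))

lemma integral_ofReal_mul_eq_zero_of_separatesPoints [T2Space X] {A : Subalgebra ℝ C(X, ℝ)}
    (hA : A.SeparatesPoints) (hφ : Continuous φ) (h : ∀ f ∈ A, ∫ x, (f x : ℂ) * φ x ∂ν = 0)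
    (f : C(X, ℝ)) : ∫ x, (f x : ℂ) * φ x ∂ν = 0 := by
  have hf : f ∈ closure (A : Set C(X, ℝ)) := by
    rw [← A.topologicalClosure_coe,
      ContinuousMap.subalgebra_topologicalClosure_eq_top_of_separatesPoints A hA]
    trivial
  exact closure_minimal h (isClosed_eq (continuous_integral_ofReal_mul hφ) continuous_const) hf

lemma eq_zero_of_forall_integral_ofReal_mul_eq_zero [ν.IsOpenPosMeasure] (hφ : Continuous φ)
    (h : ∀ f : C(X, ℝ), ∫ x, (f x : ℂ) * φ x ∂ν = 0) : φ = 0 := by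
  have hre := h ⟨fun x => (φ x).re, by fun_prop⟩
  have him := h ⟨fun x => (φ x).im, by fun_prop⟩
  simp only [ContinuousMap.coe_mk] at hre him
  have hsq : ∫ x, Complex.normSq (φ x) ∂ν = 0 := by
    apply Complex.ofReal_injective
    calc ((∫ x, Complex.normSq (φ x) ∂ν : ℝ) : ℂ)
        = ∫ x, ((φ x).re : ℂ) * φ x - Complex.I * (((φ x).im : ℂ) * φ x) ∂ν := by
          rw [← integral_complex_ofReal]
          congr 1 with x
          apply Complex.ext <;> simp [Complex.normSq_apply]; ring
      _ = 0 := by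
          rw [integral_sub (Continuous.integrable_of_compactSpace (by fun_prop))
            ((Continuous.integrable_of_compactSpace (by fun_prop)).const_mul _),
            integral_const_mul, hre, him, mul_zero, sub_zero]
  have hae := (integral_eq_zero_iff_of_nonneg (fun x => Complex.normSq_nonneg (φ x))
    (Continuous.integrable_of_compactSpace (by fun_prop))).1 hsq
  funext x
  exact Complex.normSq_eq_zero.1 <|
    congrFun ((Continuous.ae_eq_iff_eq ν (by fun_prop) continuous_const).1 hae) x

lemma eq_zero_of_integral_prod_pow_mul_eq_zero [T2Space X] [ν.IsOpenPosMeasure] {ι : Type*}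
    [Fintype ι] {y : ι → C(X, ℝ)} (hy : Function.Injective fun x i => y i x) (hφ : Continuous φ)
    (h : ∀ k : ι → ℕ, ∫ x, (∏ i, (y i x : ℂ) ^ k i) * φ x ∂ν = 0) : φ = 0 := by
  refine eq_zero_of_forall_integral_ofReal_mul_eq_zero (ν := ν) hφ <|
    integral_ofReal_mul_eq_zero_of_separatesPoints (A := Algebra.adjoin ℝ (Set.range y))
      (fun x x' hne => ?_) hφ ?_
  · obtain ⟨i, hi⟩ := Function.ne_iff.1 (hy.ne hne)
    exact ⟨y i, ⟨y i, Algebra.subset_adjoin ⟨i, rfl⟩, rfl⟩, hi⟩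
  rw [Algebra.adjoin_range_eq_range_aeval]
  rintro _ ⟨p, rfl⟩
  induction p using MvPolynomial.induction_on' with
  | monomial k a =>
    simp [MvPolynomial.aeval_monomial, Finsupp.prod_fintype, mul_assoc, integral_const_mul, h]
  | add p q hp hq =>
    simp only [map_add, ContinuousMap.add_apply, Complex.ofReal_add, add_mul]
    rw [integral_add (Continuous.integrable_of_compactSpace (by fun_prop))
      (Continuous.integrable_of_compactSpace (by fun_prop)), hp, hq, add_zero]

end Density

theorem stmt_5_general (d : ℕ) (μ : ℂ) (hμ : ∀ k : ℕ, μ ≠ (k : ℂ))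
    (φ : Metric.sphere (0 : EuclideanSpace ℝ (Fin d)) 1 → ℂ) (hφ : Continuous φ)
    (h : ∀ u : Fin d → ℂ, (∑ j, ‖u j‖ ^ 2) < 1 →
      (∫ ξ : Metric.sphere (0 : EuclideanSpace ℝ (Fin d)) 1,
        (1 - ∑ j, u j * (((ξ : EuclideanSpace ℝ (Fin d)) j : ℝ) : ℂ)) ^ μ * φ ξ
        ∂(Measure.toSphere (volume : Measure (EuclideanSpace ℝ (Fin d))))) = 0) :
    φ = 0 := by
  let y (j : Fin d) : C(Metric.sphere (0 : EuclideanSpace ℝ (Fin d)) 1, ℝ) :=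
    ⟨fun ξ => (ξ : EuclideanSpace ℝ (Fin d)) j, by fun_prop⟩
  have hy_le (j ξ) : ‖((y j ξ : ℝ) : ℂ)‖ ≤ 1 := by
    simpa [y, norm_eq_of_mem_sphere ξ] using PiLp.norm_apply_le (ξ : EuclideanSpace ℝ (Fin d)) j
  refine eq_zero_of_integral_prod_pow_mul_eq_zero (ν := volume.toSphere) (y := y)
    (fun ξ η hξη => ?_) hφ <|
    integral_prod_pow_mul_eq_zero_of_integral_sum_pow_mul_eq_zero
      (fun k => Continuous.integrable_of_compactSpace (by fun_prop)) fun v n => ?_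
  · exact Subtype.ext (WithLp.ofLp_injective 2 hξη)
  refine integral_pow_mul_eq_zero_of_integral_one_sub_mul_cpow (by fun_prop)
    (fun ξ => norm_sum_mul_le_sum_norm v _ (hy_le · ξ)) (Continuous.integrable_of_compactSpace hφ)
    hμ (fun t ht => ?_) n
  simpa [Finset.mul_sum, mul_assoc, y] using h (fun j => t * v j) (sum_norm_mul_sq_lt_one ht)

/-- If `μ ∈ ℂ` is not a non-negative integer and a continuous function `φ` on the unit
sphere `S^{d-1} ⊂ ℝ^d` satisfies `∫ (1 - ∑ u_j ξ_j)^μ φ(ξ) dξ = 0` for all `u ∈ ℂ^d` with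
`∑ |u_j|² < 1`, then `φ = 0`. -/
theorem stmt_5 (d : ℕ) (hd : 2 ≤ d) (μ : ℂ) (hμ : ∀ k : ℕ, μ ≠ (k : ℂ))
    (φ : Metric.sphere (0 : EuclideanSpace ℝ (Fin d)) 1 → ℂ) (hφ : Continuous φ)
    (h : ∀ u : Fin d → ℂ, (∑ j, ‖u j‖ ^ 2) < 1 →
      (∫ ξ : Metric.sphere (0 : EuclideanSpace ℝ (Fin d)) 1,
        (1 - ∑ j, u j * (((ξ : EuclideanSpace ℝ (Fin d)) j : ℝ) : ℂ)) ^ μ * φ ξ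
        ∂(Measure.toSphere (volume : Measure (EuclideanSpace ℝ (Fin d))))) = 0) :
    φ = 0 :=
  stmt_5_general d μ hμ φ hφ h
end

section
/- Let N ≥ 1 be an integer, d ≥ 2, and let φ be a continuous function on the unit sphere S^{d-1} ⊂ ℝ^d such that ∫_{S^{d-1}} (1 - u·ξ)^N φ(ξ) dξ = 0 for all u ∈ ℂ^d with ∑_{j=1}^d u_j² = 1. Then ∫_{S^{d-1}} p(ξ) φ(ξ) dξ = 0 for every polynomial p of degree ≤ N on ℝ^d. -/
/-!
Let `L` be integration against `φ`, viewed as a linear functional on `C(S^{d-1}, ℂ)`, and `x_j` the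
coordinate functions, so that `∑ x_j² = 1`; write `g_n(u) = L((1 - u·x)^n)` and
`Q = {u ∈ ℂ^d | u·u = 1}`. For `u ∈ Q`, `u·w = 0` and `s = w·w`, the points
`u_z = ((1 - s z²) u + 2 z w) / (1 + s z²)` lie on `Q`, and `(1 + s z²)(1 - u_z·x)` is quadratic in
`z`. If `g_{m+2} = 0` on `Q`, the `z²`-coefficient of `(1 + s z²)^{m+2} g_{m+2}(u_z)` gives
`(m+1) L((1 - u·x)^m (w·x)²) + s g_{m+1}(u) = 0`. Summing over `w_j = e_j - u_j u`, for which
`∑ (w_j·x)² = 1 - (u·x)²` and `∑ w_j·w_j = d - 1`, yields `(2m + 1 + d) g_{m+1}(u) = 0`. So all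
`g_n` with `n ≤ N` vanish on `Q`, hence so does every `L((u·x)^n)`; by homogeneity `L((v·x)^n) = 0`
whenever `v·v ≠ 0`, and this polynomial in `v` therefore vanishes identically. Its coefficients
are the moments `L(x^α)`, `|α| = n`, up to multinomial factors.
-/

open Finset Matrix MeasureTheory

section Coefficients

open Polynomial

variable {R : Type*} [CommRing R] [Algebra ℂ R] (L : R →ₗ[ℂ] ℂ)

theorem map_coeff_eq_zero_of_map_eval_eq_zero (p : R[X]) {S : Set ℂ} (hS : S.Infinite)
    (h : ∀ z ∈ S, L (p.eval (algebraMap ℂ R z)) = 0) (k : ℕ) : L (p.coeff k) = 0 := by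
  set q : ℂ[X] := ∑ i ∈ range (p.natDegree + k + 1), C (L (p.coeff i)) * X ^ i
  have hq : ∀ z, q.eval z = L (p.eval (algebraMap ℂ R z)) := fun z => by
    rw [eval_eq_sum_range' (p := p) (n := p.natDegree + k + 1) (by omega), map_sum,
      eval_finsetSum]
    refine sum_congr rfl fun i _ => ?_
    rw [← map_pow, mul_comm (p.coeff i), ← Algebra.smul_def, map_smul, smul_eq_mul]
    simp only [eval_mul, eval_pow, eval_C, eval_X]
    ring
  have hq0 : q = 0 := eq_zero_of_infinite_isRoot q (hS.mono fun z hz => by simp [hq, h z hz])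
  simpa [q, finsetSum_coeff, coeff_C_mul_X_pow] using congr_arg (coeff · k) hq0

theorem two_nsmul_coeff_two_quadratic_pow {A : Type*} [CommRing A] (a b c : A) (m : ℕ) :
    2 • ((C a + C b * X + C c * X ^ 2) ^ (m + 2)).coeff 2
      = ((m + 2) * (m + 1)) • (a ^ m * b ^ 2) + (2 * (m + 2)) • (a ^ (m + 1) * c) := by
  -- twice the `X²`-coefficient is the second derivative at `0`
  have h := coeff_iterate_derivative (k := 2) ((C a + C b * X + C c * X ^ 2) ^ (m + 2)) 0
  simp only [Function.iterate_succ, Function.iterate_zero, Function.comp_apply, id,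
    coeff_zero_eq_eval_zero] at h
  simp only [derivative_pow, Nat.cast_add, Nat.cast_ofNat, map_add, map_natCast,
    Nat.add_one_sub_one, derivative_C, derivative_mul, zero_mul, derivative_X,
    mul_one, zero_add, pow_one, derivative_natCast, add_zero, Nat.cast_one, map_one,
    add_tsub_cancel_right, eval_add, eval_mul, eval_natCast, eval_C, eval_one, eval_pow, eval_X,
    mul_zero, ne_eq, OfNat.ofNat_ne_zero, not_false_eq_true, zero_pow, Nat.descFactorial_succ,
    tsub_zero, Nat.descFactorial_zero, one_mul, nsmul_eq_mul] at h
  simp only [nsmul_eq_mul]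
  push_cast
  linear_combination -h

theorem map_second_coeff_eq_zero (a b c : R) (m : ℕ) {S : Set ℂ} (hS : S.Infinite)
    (h : ∀ z ∈ S, L ((a + z • b + z ^ 2 • c) ^ (m + 2)) = 0) :
    (m + 1) * L (a ^ m * b ^ 2) + 2 * L (a ^ (m + 1) * c) = 0 := by
  have h2 := map_coeff_eq_zero_of_map_eval_eq_zero L ((C a + C b * X + C c * X ^ 2) ^ (m + 2)) hS
    (fun z hz => by
      convert h z hz using 3
      simp only [eval_add, eval_mul, eval_C, eval_X, eval_pow, Algebra.smul_def, map_pow]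
      ring) 2
  have h2' : L (2 • ((C a + C b * X + C c * X ^ 2) ^ (m + 2)).coeff 2) = 0 := by
    rw [map_nsmul, h2, smul_zero]
  rw [two_nsmul_coeff_two_quadratic_pow, map_add, map_nsmul, map_nsmul, nsmul_eq_mul,
    nsmul_eq_mul] at h2'
  push_cast at h2'
  have hm : (m : ℂ) + 2 ≠ 0 := by exact_mod_cast Nat.succ_ne_zero (m + 1)
  apply mul_left_cancel₀ hm
  linear_combination h2'

end Coefficients

section Quadric

variable {R : Type*} [CommRing R] [Algebra ℂ R] {d : ℕ} {x : Fin d → R} (L : R →ₗ[ℂ] ℂ)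

local notation "⟪" u "⟫" => Fintype.linearCombination ℂ x u

theorem map_tangent_sq {m : ℕ}
    (hm : ∀ u : Fin d → ℂ, u ⬝ᵥ u = 1 → L ((1 - ⟪u⟫) ^ (m + 2)) = 0)
    {u w : Fin d → ℂ} (hu : u ⬝ᵥ u = 1) (huw : u ⬝ᵥ w = 0) :
    (m + 1) * L ((1 - ⟪u⟫) ^ m * ⟪w⟫ ^ 2) + (w ⬝ᵥ w) * L ((1 - ⟪u⟫) ^ (m + 1)) = 0 := by
  set S := {z : ℂ | 1 + w ⬝ᵥ w * z ^ 2 ≠ 0}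
  have hS : S.Infinite := by
    have hq : (Polynomial.C (w ⬝ᵥ w) * Polynomial.X ^ 2 + 1 : Polynomial ℂ) ≠ 0 := fun h => by
      simpa using congr_arg (Polynomial.eval 0) h
    refine (Polynomial.finite_setOfPred_isRoot hq).infinite_compl.mono fun z hz => ?_
    simpa [S, add_comm] using hz
  have hcurve : ∀ z ∈ S,
      L ((1 - ⟪u⟫ + z • ((-2 : ℂ) • ⟪w⟫) + z ^ 2 • ((w ⬝ᵥ w) • (1 + ⟪u⟫))) ^ (m + 2)) = 0 := by
    intro z hz
    have hc : 1 + w ⬝ᵥ w * z ^ 2 ≠ 0 := hz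
    set v := (1 + w ⬝ᵥ w * z ^ 2)⁻¹ • ((1 - w ⬝ᵥ w * z ^ 2) • u + (2 * z) • w)
    have hv : v ⬝ᵥ v = 1 := by
      simp only [v, dotProduct_add, add_dotProduct, dotProduct_smul, smul_dotProduct, hu, huw,
        dotProduct_comm w u, smul_eq_mul]
      field_simp
      ring
    have hpt : 1 - ⟪u⟫ + z • ((-2 : ℂ) • ⟪w⟫) + z ^ 2 • ((w ⬝ᵥ w) • (1 + ⟪u⟫))
        = (1 + w ⬝ᵥ w * z ^ 2) • (1 - ⟪v⟫) := by
      simp only [v, map_smul, map_add, smul_sub, smul_smul, mul_inv_cancel₀ hc, one_smul]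
      module
    rw [hpt, smul_pow, map_smul, hm v hv, smul_zero]
  have h2 := map_second_coeff_eq_zero L _ _ _ m hS hcurve
  rw [smul_pow, mul_smul_comm, mul_smul_comm,
    show (1 - ⟪u⟫) ^ (m + 1) * (1 + ⟪u⟫) = (2 : ℂ) • (1 - ⟪u⟫) ^ (m + 1) - (1 - ⟪u⟫) ^ (m + 2) by
      rw [two_smul]; ring,
    map_smul, map_smul, map_sub, map_smul, hm u hu] at h2
  simp only [smul_eq_mul] at h2
  linear_combination h2 / 4

def tangentFrame (u : Fin d → ℂ) (j : Fin d) : Fin d → ℂ := Pi.single j 1 - u j • u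

theorem dotProduct_tangentFrame {u : Fin d → ℂ} (hu : u ⬝ᵥ u = 1) (j : Fin d) :
    u ⬝ᵥ tangentFrame u j = 0 := by
  simp [tangentFrame, dotProduct_sub, dotProduct_single, hu]

theorem sum_tangentFrame_dotProduct_self {u : Fin d → ℂ} (hu : u ⬝ᵥ u = 1) :
    ∑ j, tangentFrame u j ⬝ᵥ tangentFrame u j = d - 1 := by
  have hj (j : Fin d) : tangentFrame u j ⬝ᵥ tangentFrame u j = 1 - u j * u j := by
    simp [tangentFrame, sub_dotProduct, dotProduct_sub, single_dotProduct, dotProduct_single, hu]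
  simp only [hj, sum_sub_distrib, sum_const, card_univ, Fintype.card_fin, nsmul_eq_mul, mul_one]
  rw [show ∑ j, u j * u j = u ⬝ᵥ u from rfl, hu]

theorem sum_linearCombination_tangentFrame_sq (hx : ∑ j, x j ^ 2 = 1) {u : Fin d → ℂ}
    (hu : u ⬝ᵥ u = 1) : ∑ j, ⟪tangentFrame u j⟫ ^ 2 = 1 - ⟪u⟫ ^ 2 :=
  calc ∑ j, ⟪tangentFrame u j⟫ ^ 2
      = ∑ j, (x j ^ 2 - 2 * (u j • x j) * ⟪u⟫ + (u j * u j) • ⟪u⟫ ^ 2) := by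
        refine sum_congr rfl fun j _ => ?_
        rw [tangentFrame, map_sub, map_smul, Fintype.linearCombination_apply_single, one_smul]
        simp only [Algebra.smul_def, map_mul]
        ring
    _ = 1 - ⟪u⟫ ^ 2 := by
        rw [sum_add_distrib, sum_sub_distrib, ← sum_mul, ← mul_sum, ← sum_smul,
          ← Fintype.linearCombination_apply, hx, show ∑ j, u j * u j = u ⬝ᵥ u from rfl, hu,
          one_smul]
        ring

theorem map_one_sub_pow_succ_eq_zero (hx : ∑ j, x j ^ 2 = 1) {m : ℕ}
    (hm : ∀ u : Fin d → ℂ, u ⬝ᵥ u = 1 → L ((1 - ⟪u⟫) ^ (m + 2)) = 0)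
    {u : Fin d → ℂ} (hu : u ⬝ᵥ u = 1) : L ((1 - ⟪u⟫) ^ (m + 1)) = 0 := by
  have htrace := sum_eq_zero fun j (_ : j ∈ univ) =>
    map_tangent_sq L hm hu (dotProduct_tangentFrame hu j)
  rw [sum_add_distrib, ← mul_sum, ← map_sum, ← mul_sum, ← sum_mul,
    sum_linearCombination_tangentFrame_sq hx hu, sum_tangentFrame_dotProduct_self hu,
    show (1 - ⟪u⟫) ^ m * (1 - ⟪u⟫ ^ 2) = (2 : ℂ) • (1 - ⟪u⟫) ^ (m + 1) - (1 - ⟪u⟫) ^ (m + 2) by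
      rw [two_smul]; ring,
    map_sub, map_smul, hm u hu, smul_eq_mul] at htrace
  have hne : (2 * m + 1 + d : ℂ) ≠ 0 := by exact_mod_cast (by omega : 2 * m + 1 + d ≠ 0)
  exact (mul_eq_zero.mp (by linear_combination htrace)).resolve_left hne

theorem map_one_eq_zero (h : ∀ u : Fin d → ℂ, u ⬝ᵥ u = 1 → L ((1 - ⟪u⟫) ^ 1) = 0)
    {u : Fin d → ℂ} (hu : u ⬝ᵥ u = 1) : L 1 = 0 := by
  have hplus := h u hu
  have hminus := h (-u) (by rwa [neg_dotProduct, dotProduct_neg, neg_neg])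
  rw [pow_one, map_sub] at hplus
  rw [pow_one, map_neg, sub_neg_eq_add, map_add] at hminus
  linear_combination (hplus + hminus) / 2

theorem map_one_sub_pow_eq_zero_of_le (hx : ∑ j, x j ^ 2 = 1) {N : ℕ}
    (hN : ∀ u : Fin d → ℂ, u ⬝ᵥ u = 1 → L ((1 - ⟪u⟫) ^ N) = 0) {n : ℕ} (hn : n ≤ N) :
    ∀ u : Fin d → ℂ, u ⬝ᵥ u = 1 → L ((1 - ⟪u⟫) ^ n) = 0 := by
  induction hn using Nat.decreasingInduction with
  | self => exact hN
  | of_succ k _ hk =>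
    cases k with
    | zero => exact fun u hu => by rw [pow_zero, map_one_eq_zero L hk hu]
    | succ m => exact fun u hu => map_one_sub_pow_succ_eq_zero L hx hk hu

theorem map_pow_eq_zero_of_map_one_sub_pow (y : R) {n : ℕ}
    (h : ∀ k ≤ n, L ((1 - y) ^ k) = 0) : L (y ^ n) = 0 := by
  obtain ⟨a, rfl⟩ : ∃ a, y = 1 - a := ⟨1 - y, by ring⟩
  simp only [sub_sub_cancel] at h
  rw [sub_eq_neg_add, add_pow, map_sum]
  refine sum_eq_zero fun k hk => ?_
  have hterm : (-a) ^ k * 1 ^ (n - k) * (n.choose k : R) = ((-1) ^ k * n.choose k : ℤ) • a ^ k := by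
    rw [zsmul_eq_mul]
    push_cast
    ring
  rw [hterm, map_zsmul, h k (mem_range_succ_iff.mp hk), smul_zero]

theorem map_pow_eq_zero_of_dotProduct_self_ne_zero {n : ℕ}
    (h : ∀ u : Fin d → ℂ, u ⬝ᵥ u = 1 → L (⟪u⟫ ^ n) = 0) {v : Fin d → ℂ} (hv : v ⬝ᵥ v ≠ 0) :
    L (⟪v⟫ ^ n) = 0 := by
  obtain ⟨μ, hμ⟩ := IsAlgClosed.exists_pow_nat_eq (v ⬝ᵥ v) two_pos
  have hμ0 : μ ≠ 0 := by rintro rfl; exact hv (by rw [← hμ]; ring)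
  have hu : (μ⁻¹ • v) ⬝ᵥ (μ⁻¹ • v) = 1 := by
    rw [dotProduct_smul, smul_dotProduct, ← hμ, smul_eq_mul, smul_eq_mul]
    field_simp
  calc L (⟪v⟫ ^ n) = L ((μ • ⟪μ⁻¹ • v⟫) ^ n) := by
        rw [← map_smul, smul_smul, mul_inv_cancel₀ hμ0, one_smul]
    _ = 0 := by rw [smul_pow, map_smul, h _ hu, smul_zero]

open MvPolynomial

variable (x) in
noncomputable def momentPolynomial (n : ℕ) : MvPolynomial (Fin d) ℂ :=
  ∑ α ∈ piAntidiag univ n,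
    monomial (Finsupp.equivFunOnFinite.symm α) (Nat.multinomial univ α * L (∏ j, x j ^ α j))

theorem eval_momentPolynomial (n : ℕ) (v : Fin d → ℂ) :
    eval v (momentPolynomial x L n) = L (⟪v⟫ ^ n) := by
  rw [momentPolynomial, map_sum, Fintype.linearCombination_apply, sum_pow_eq_sum_piAntidiag,
    map_sum]
  refine sum_congr rfl fun α _ => ?_
  rw [eval_monomial, Finsupp.prod_fintype _ _ fun _ => pow_zero _]
  simp only [Algebra.smul_def, mul_pow, prod_mul_distrib, ← map_pow, ← map_prod,
    Finsupp.coe_equivFunOnFinite_symm]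
  rw [← map_natCast (algebraMap ℂ R), ← mul_assoc, ← map_mul, ← Algebra.smul_def, map_smul,
    smul_eq_mul]
  ring

theorem coeff_momentPolynomial {n : ℕ} {α : Fin d → ℕ} (hα : α ∈ piAntidiag univ n) :
    coeff (Finsupp.equivFunOnFinite.symm α) (momentPolynomial x L n)
      = Nat.multinomial univ α * L (∏ j, x j ^ α j) := by
  rw [momentPolynomial, coeff_sum, sum_eq_single_of_mem α hα, coeff_monomial, if_pos rfl]
  intro β _ hβ
  rw [coeff_monomial, if_neg fun h => hβ (Finsupp.equivFunOnFinite.symm.injective h)]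

theorem MvPolynomial.eq_zero_of_forall_eval_eq_zero_of_dotProduct_self_ne_zero {K σ : Type*}
    [CommRing K] [IsDomain K] [Infinite K] [Fintype σ] [Nonempty σ] {P : MvPolynomial σ K}
    (h : ∀ v : σ → K, v ⬝ᵥ v ≠ 0 → eval v P = 0) : P = 0 := by
  classical
  have heval : ∀ v : σ → K, eval v (∑ i, X i ^ 2 : MvPolynomial σ K) = v ⬝ᵥ v := fun v => by
    simp [dotProduct, sq]
  have hS : (∑ i, X i ^ 2 : MvPolynomial σ K) ≠ 0 := fun h0 => by
    obtain ⟨i⟩ := ‹Nonempty σ›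
    simpa [heval, single_dotProduct] using congr_arg (eval (Pi.single i 1)) h0
  have hPS : P * ∑ i, X i ^ 2 = 0 := MvPolynomial.funext fun v => by
    by_cases hv : v ⬝ᵥ v = 0
    · rw [map_mul, heval, hv, mul_zero, map_zero]
    · rw [map_mul, h v hv, zero_mul, map_zero]
  exact (mul_eq_zero.mp hPS).resolve_right hS

theorem map_prod_pow_eq_zero [Nonempty (Fin d)] {n : ℕ}
    (h : ∀ v : Fin d → ℂ, v ⬝ᵥ v ≠ 0 → L (⟪v⟫ ^ n) = 0) {α : Fin d → ℕ} (hα : ∑ j, α j = n) :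
    L (∏ j, x j ^ α j) = 0 := by
  have hP : momentPolynomial x L n = 0 :=
    eq_zero_of_forall_eval_eq_zero_of_dotProduct_self_ne_zero fun v hv => by
      rw [eval_momentPolynomial, h v hv]
  have hcoeff := coeff_momentPolynomial (x := x) L (mem_piAntidiag.mpr ⟨hα, fun j _ => mem_univ j⟩)
  rw [hP, coeff_zero] at hcoeff
  exact (mul_eq_zero.mp hcoeff.symm).resolve_left
    (Nat.cast_ne_zero.mpr (Nat.multinomial_pos _ _).ne')

theorem map_aeval_eq_zero_of_totalDegree_le (hx : ∑ j, x j ^ 2 = 1) {N : ℕ}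
    (hN : ∀ u : Fin d → ℂ, u ⬝ᵥ u = 1 → L ((1 - ⟪u⟫) ^ N) = 0)
    {𝕜 : Type*} [CommSemiring 𝕜] [Algebra 𝕜 ℂ] [Algebra 𝕜 R] [IsScalarTower 𝕜 ℂ R]
    {f : MvPolynomial (Fin d) 𝕜} (hf : f.totalDegree ≤ N) : L (aeval x f) = 0 := by
  rcases isEmpty_or_nonempty (Fin d) with hd | hd
  · have : Subsingleton R := subsingleton_of_zero_eq_one (by simpa using hx)
    rw [Subsingleton.elim (aeval x f) 0, map_zero]
  have hmoment {α : Fin d → ℕ} (hα : ∑ j, α j ≤ N) : L (∏ j, x j ^ α j) = 0 :=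
    map_prod_pow_eq_zero L (fun v hv => map_pow_eq_zero_of_dotProduct_self_ne_zero L
      (fun u hu => map_pow_eq_zero_of_map_one_sub_pow L _ fun k hk =>
        map_one_sub_pow_eq_zero_of_le L hx hN (hk.trans hα) u hu) hv) rfl
  rw [f.as_sum, map_sum, map_sum]
  refine sum_eq_zero fun s hs => ?_
  rw [aeval_monomial, Finsupp.prod_fintype _ _ fun _ => pow_zero _,
    IsScalarTower.algebraMap_apply 𝕜 ℂ R, ← Algebra.smul_def, map_smul,
    hmoment (by simpa [Finsupp.sum_fintype] using (le_totalDegree hs).trans hf), smul_zero]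

end Quadric

section Sphere

variable {X : Type*} [TopologicalSpace X] [CompactSpace X] [MeasurableSpace X]
  [OpensMeasurableSpace X]

noncomputable def integralAgainst (μ : Measure X) {φ : X → ℂ} (hφ : Integrable φ μ) :
    C(X, ℂ) →ₗ[ℂ] ℂ where
  toFun f := ∫ ξ, f ξ * φ ξ ∂μ
  map_add' f g := by
    simp only [ContinuousMap.add_apply, add_mul]
    exact integral_add
      (hφ.bdd_mul f.continuous.aestronglyMeasurable (ae_of_all _ f.norm_coe_le_norm))
      (hφ.bdd_mul g.continuous.aestronglyMeasurable (ae_of_all _ g.norm_coe_le_norm))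
  map_smul' c f := by
    simp only [ContinuousMap.smul_apply, smul_eq_mul, mul_assoc, integral_const_mul,
      RingHom.id_apply]

@[simp]
theorem integralAgainst_apply (μ : Measure X) {φ : X → ℂ} (hφ : Integrable φ μ) (f : C(X, ℂ)) :
    integralAgainst μ hφ f = ∫ ξ, f ξ * φ ξ ∂μ :=
  rfl

variable {d : ℕ}

noncomputable def sphereCoord (j : Fin d) :
    C(Metric.sphere (0 : EuclideanSpace ℝ (Fin d)) 1, ℂ) :=
  ⟨fun ξ => ((ξ : EuclideanSpace ℝ (Fin d)) j : ℂ), by fun_prop⟩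

theorem sum_sphereCoord_sq : ∑ j, sphereCoord (d := d) j ^ 2 = 1 := by
  ext ξ
  have h := EuclideanSpace.real_norm_sq_eq (ξ : EuclideanSpace ℝ (Fin d))
  rw [norm_eq_of_mem_sphere ξ, one_pow] at h
  simp only [sphereCoord, ContinuousMap.coe_sum, ContinuousMap.coe_pow, ContinuousMap.coe_mk,
    Finset.sum_apply, Pi.pow_apply, ContinuousMap.one_apply]
  exact_mod_cast h.symm

theorem linearCombination_sphereCoord_apply (u : Fin d → ℂ)
    (ξ : Metric.sphere (0 : EuclideanSpace ℝ (Fin d)) 1) :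
    Fintype.linearCombination ℂ sphereCoord u ξ
      = ∑ j, u j * ((ξ : EuclideanSpace ℝ (Fin d)) j : ℂ) := by
  simp [sphereCoord, Fintype.linearCombination_apply]

theorem aeval_sphereCoord_apply (p : MvPolynomial (Fin d) ℝ)
    (ξ : Metric.sphere (0 : EuclideanSpace ℝ (Fin d)) 1) :
    MvPolynomial.aeval sphereCoord p ξ
      = ((MvPolynomial.eval (fun i => (ξ : EuclideanSpace ℝ (Fin d)) i) p : ℝ) : ℂ) := by
  rw [← ContinuousMap.evalAlgHom_apply (S := ℝ), MvPolynomial.comp_aeval_apply]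
  simp only [sphereCoord, ContinuousMap.evalAlgHom_apply, ContinuousMap.coe_mk,
    MvPolynomial.aeval_def]
  exact (MvPolynomial.eval₂_comp_left (algebraMap ℝ ℂ) (RingHom.id ℝ) _ p).symm

end Sphere

theorem stmt_6_general (d N : ℕ)
    (φ : Metric.sphere (0 : EuclideanSpace ℝ (Fin d)) 1 → ℂ) (hφ : Continuous φ)
    (h : ∀ u : Fin d → ℂ, (∑ j, u j ^ 2) = 1 →
      (∫ ξ : Metric.sphere (0 : EuclideanSpace ℝ (Fin d)) 1,
        (1 - ∑ j, u j * (((ξ : EuclideanSpace ℝ (Fin d)) j : ℝ) : ℂ)) ^ N * φ ξ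
        ∂(Measure.toSphere (volume : Measure (EuclideanSpace ℝ (Fin d))))) = 0) :
    ∀ p : MvPolynomial (Fin d) ℝ, p.totalDegree ≤ N →
      (∫ ξ : Metric.sphere (0 : EuclideanSpace ℝ (Fin d)) 1,
        ((MvPolynomial.eval (fun i => (ξ : EuclideanSpace ℝ (Fin d)) i) p : ℝ) : ℂ) * φ ξ
        ∂(Measure.toSphere (volume : Measure (EuclideanSpace ℝ (Fin d))))) = 0 := by
  intro p hp
  have hφint : Integrable φ (volume : Measure (EuclideanSpace ℝ (Fin d))).toSphere :=
    hφ.integrable_of_hasCompactSupport (HasCompactSupport.of_compactSpace φ)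
  have hquadric (u : Fin d → ℂ) (hu : u ⬝ᵥ u = 1) :
      integralAgainst _ hφint ((1 - Fintype.linearCombination ℂ sphereCoord u) ^ N) = 0 := by
    simpa [linearCombination_sphereCoord_apply] using h u (by simpa [dotProduct, sq] using hu)
  simpa [aeval_sphereCoord_apply] using
    map_aeval_eq_zero_of_totalDegree_le (integralAgainst _ hφint) sum_sphereCoord_sq hquadric hp

/-- If `N ≥ 1` and a continuous function `φ` on the unit sphere `S^{d-1} ⊂ ℝ^d` satisfies
`∫ (1 - u·ξ)^N φ(ξ) dξ = 0` for all `u ∈ ℂ^d` with `∑ u_j² = 1`, then `φ` is orthogonal to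
every polynomial of degree `≤ N` on `ℝ^d`. -/
theorem stmt_6 (d N : ℕ) (hd : 2 ≤ d) (hN : 1 ≤ N)
    (φ : Metric.sphere (0 : EuclideanSpace ℝ (Fin d)) 1 → ℂ) (hφ : Continuous φ)
    (h : ∀ u : Fin d → ℂ, (∑ j, u j ^ 2) = 1 →
      (∫ ξ : Metric.sphere (0 : EuclideanSpace ℝ (Fin d)) 1,
        (1 - ∑ j, u j * (((ξ : EuclideanSpace ℝ (Fin d)) j : ℝ) : ℂ)) ^ N * φ ξ
        ∂(Measure.toSphere (volume : Measure (EuclideanSpace ℝ (Fin d))))) = 0) :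
    ∀ p : MvPolynomial (Fin d) ℝ, p.totalDegree ≤ N →
      (∫ ξ : Metric.sphere (0 : EuclideanSpace ℝ (Fin d)) 1,
        ((MvPolynomial.eval (fun i => (ξ : EuclideanSpace ℝ (Fin d)) i) p : ℝ) : ℂ) * φ ξ
        ∂(Measure.toSphere (volume : Measure (EuclideanSpace ℝ (Fin d))))) = 0 :=
  stmt_6_general d N φ hφ h
end

section
/- For real λ close to the non-negative integer n, writing λ = n + ετs with s = |λ-n| ∈ (0,1), τ = (-1)^{n-l+1}, ε = sign((-1)^{n-l+1}(λ-n)), and l ≤ n, the normalization factor satisfies ε γ_l(λ) > 0 and ε γ_l(λ) = π Γ(l+n+d-1+ετs) / (2 sin(πs) Γ(1+n-l+ετs)) ~ Γ(l+n+d-1) / (2 (n-l)! s) as s → 0. -/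
/-!
With `m = n - l` and `λ = n + σ s`, the first Gamma factor is `Γ(-m - σ s)`, and the reflection
formula at `-m - σ s` gives `Γ(-m - σ s) Γ(1 + m + σ s) = (-1)^(m+1) σ π / sin(π s)`.
The sign `σ (-1)^(m+1)` therefore cancels, leaving the positive closed form. As `s → 0`,
`π s / sin(π s) → 1`, `Γ(1 + m + σ s) → m!` and `Γ(l + n + d - 1 + σ s) → Γ(l + n + d - 1)`.
-/

open Filter Real Topology
open scoped Nat

theorem Real.Gamma_neg_nat_sub_mul_Gamma_one_add_nat_add (m : ℕ) (t : ℝ) :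
    Gamma (-m - t) * Gamma (1 + m + t) = (-1) ^ (m + 1) * π / sin (π * t) := by
  have h := Gamma_mul_Gamma_one_sub (-m - t)
  rw [show 1 - (-m - t) = 1 + m + t by ring, show π * (-m - t) = -(π * t) - m * π by ring,
    sin_sub_nat_mul_pi, sin_neg] at h
  rw [h, div_eq_mul_inv, div_eq_mul_inv, mul_inv, ← inv_pow, inv_neg_one, inv_neg, pow_succ]
  ring

theorem Real.sin_pi_mul_mul_of_eq_one_or_eq_neg_one {σ : ℝ} (hσ : σ = 1 ∨ σ = -1) (s : ℝ) :
    sin (π * (σ * s)) = σ * sin (π * s) := by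
  rcases hσ with rfl | rfl <;> simp

theorem sign_mul_half_Gamma_neg_nat_sub_mul_Gamma {m : ℕ} {σ s : ℝ} (hσ : σ = 1 ∨ σ = -1)
    (hpos : 0 < 1 + m + σ * s) (a : ℝ) :
    σ * (-1) ^ (m + 1) * (1 / 2 * Gamma (-m - σ * s) * Gamma (a + σ * s)) =
      π * Gamma (a + σ * s) / (2 * sin (π * s) * Gamma (1 + m + σ * s)) := by
  have hΓ := Gamma_neg_nat_sub_mul_Gamma_one_add_nat_add m (σ * s)
  rw [sin_pi_mul_mul_of_eq_one_or_eq_neg_one hσ, ← eq_div_iff (Gamma_pos_of_pos hpos).ne'] at hΓ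
  have hsign : ((-1 : ℝ) ^ (m + 1)) ^ 2 = 1 := by rw [← pow_mul, pow_mul']; simp
  have hσ2 : σ ^ 2 = 1 := by rcases hσ with rfl | rfl <;> norm_num
  have hσinv : σ⁻¹ = σ := by rcases hσ with rfl | rfl <;> norm_num
  rw [hΓ]
  simp only [div_eq_mul_inv, mul_inv, hσinv]
  set K := π * Gamma (a + σ * s) * (sin (π * s))⁻¹ * (Gamma (1 + m + σ * s))⁻¹ / 2
  linear_combination K * σ ^ 2 * hsign + K * hσ2

theorem Real.continuousAt_Gamma_of_pos {x : ℝ} (hx : 0 < x) : ContinuousAt Gamma x :=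
  (differentiableOn_Gamma_Ioi.differentiableAt (Ioi_mem_nhds hx)).continuousAt

theorem pi_mul_Gamma_div_sin_mul_Gamma_pos {m : ℕ} {a σ s : ℝ} (ha : 1 ≤ a) (hσs : |σ * s| < 1)
    (hs0 : 0 < s) (hs1 : s < 1) :
    0 < π * Gamma (a + σ * s) / (2 * sin (π * s) * Gamma (1 + m + σ * s)) := by
  obtain ⟨hlo, hhi⟩ := abs_lt.mp hσs
  have hsin : 0 < sin (π * s) := sin_pos_of_pos_of_lt_pi (by positivity) (by nlinarith [pi_pos])
  have hΓa := Gamma_pos_of_pos (show 0 < a + σ * s by linarith)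
  have hΓb := Gamma_pos_of_pos (show 0 < 1 + m + σ * s by linarith [m.cast_nonneg (α := ℝ)])
  positivity

theorem tendsto_pi_mul_Gamma_div_sin_mul_Gamma_div (m : ℕ) {a : ℝ} (ha : 0 < a) (σ : ℝ) :
    Tendsto (fun s => π * Gamma (a + σ * s) / (2 * sin (π * s) * Gamma (1 + m + σ * s)) /
      (Gamma a / (2 * m ! * s))) (𝓝[≠] 0) (𝓝 1) := by
  have hΓ : ∀ {x : ℝ}, 0 < x → ContinuousAt (fun s => Gamma (x + σ * s)) 0 := fun hx =>
    (continuousAt_Gamma_of_pos (by simpa using hx)).comp (by fun_prop)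
  have hcont : ContinuousAt (fun s => (sinc (π * s))⁻¹ * (Gamma (a + σ * s) / Gamma a) *
      (m ! / Gamma (1 + m + σ * s))) 0 := by
    refine ((((continuous_sinc.comp (continuous_const_mul π)).continuousAt).inv₀ ?_).mul
      ((hΓ ha).div_const _)).mul (continuousAt_const.div (hΓ (by positivity)) ?_)
    · simp
    · simpa using (Gamma_pos_of_pos (show (0 : ℝ) < 1 + m by positivity)).ne'
  have hlim := hcont.tendsto
  rw [mul_zero, sinc_zero, inv_one, one_mul, mul_zero, add_zero, add_zero, add_comm,
    Gamma_nat_eq_factorial, div_self (Gamma_pos_of_pos ha).ne', div_self (by positivity),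
    one_mul] at hlim
  refine (hlim.mono_left nhdsWithin_le_nhds).congr' ?_
  filter_upwards [self_mem_nhdsWithin] with s (hs : s ≠ 0)
  rw [sinc_of_ne_zero (mul_ne_zero pi_ne_zero hs)]
  simp only [div_eq_mul_inv, mul_inv, inv_inv]
  ring_nf

/-- For `λ = n + ετs` with `s = |λ - n| ∈ (0,1)`, `τ = (-1)^{n-l+1}`,
`ε = sign((-1)^{n-l+1}(λ-n))` and `l ≤ n`, the normalization factor
`γ_l(λ) = (1/2) Γ(l-λ) Γ(λ+l+d-1)` satisfies `ε γ_l(λ) > 0`,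
`ε γ_l(λ) = π Γ(l+n+d-1+ετs) / (2 sin(πs) Γ(1+n-l+ετs))`, and
`ε γ_l(λ) ~ Γ(l+n+d-1) / (2 (n-l)! s)` as `s → 0⁺`. -/
theorem stmt_15 (d n l : ℕ) (hd : 2 ≤ d) (hl : l ≤ n)
    (σ : ℝ) (hσ : σ = 1 ∨ σ = -1) :
    -- here `σ = ετ` (so that `λ = n + σ s`), `τ = (-1)^{n-l+1}`, `ε = σ τ`
    (∀ s : ℝ, 0 < s → s < 1 →
      0 < (σ * (-1 : ℝ) ^ (n - l + 1)) *
          ((1 / 2) * Real.Gamma ((l : ℝ) - ((n : ℝ) + σ * s)) *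
            Real.Gamma (((n : ℝ) + σ * s) + l + d - 1)) ∧
      (σ * (-1 : ℝ) ^ (n - l + 1)) *
          ((1 / 2) * Real.Gamma ((l : ℝ) - ((n : ℝ) + σ * s)) *
            Real.Gamma (((n : ℝ) + σ * s) + l + d - 1)) =
        π * Real.Gamma ((l : ℝ) + n + d - 1 + σ * s) /
          (2 * Real.sin (π * s) * Real.Gamma (1 + (n : ℝ) - l + σ * s))) ∧
    Tendsto (fun s : ℝ =>
        ((σ * (-1 : ℝ) ^ (n - l + 1)) *
            ((1 / 2) * Real.Gamma ((l : ℝ) - ((n : ℝ) + σ * s)) *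
              Real.Gamma (((n : ℝ) + σ * s) + l + d - 1))) /
          (Real.Gamma ((l : ℝ) + n + d - 1) / (2 * (Nat.factorial (n - l)) * s)))
      (nhdsWithin 0 (Set.Ioi 0)) (nhds 1) := by
  have hm : ((n - l : ℕ) : ℝ) = n - l := Nat.cast_sub hl
  generalize n - l = m at hm ⊢
  have harg₁ (t : ℝ) : (l : ℝ) - (n + t) = -m - t := by rw [hm]; ring
  have harg₂ (t : ℝ) : (n : ℝ) + t + l + d - 1 = l + n + d - 1 + t := by ring
  have harg₃ (t : ℝ) : 1 + (n : ℝ) - l + t = 1 + m + t := by rw [hm]; ring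
  simp only [harg₁, harg₂, harg₃]
  have ha : (1 : ℝ) ≤ l + n + d - 1 := by
    have : (2 : ℝ) ≤ d := by exact_mod_cast hd
    linarith [l.cast_nonneg (α := ℝ), n.cast_nonneg (α := ℝ)]
  have hσs {s : ℝ} (hs0 : 0 < s) (hs1 : s < 1) : |σ * s| < 1 := by
    rcases hσ with rfl | rfl <;> simp [abs_of_pos hs0, hs1]
  have hpos {s : ℝ} (hs0 : 0 < s) (hs1 : s < 1) : 0 < 1 + m + σ * s := by
    linarith [(abs_lt.mp (hσs hs0 hs1)).1, m.cast_nonneg (α := ℝ)]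
  refine ⟨fun s hs0 hs1 => ?_, ?_⟩
  · rw [sign_mul_half_Gamma_neg_nat_sub_mul_Gamma hσ (hpos hs0 hs1)]
    exact ⟨pi_mul_Gamma_div_sin_mul_Gamma_pos ha (hσs hs0 hs1) hs0 hs1, rfl⟩
  · refine ((tendsto_pi_mul_Gamma_div_sin_mul_Gamma_div m (zero_lt_one.trans_le ha) σ).mono_left
      (nhdsGT_le_nhdsNE 0)).congr' ?_
    filter_upwards [Ioo_mem_nhdsGT zero_lt_one] with s ⟨hs0, hs1⟩
    rw [sign_mul_half_Gamma_neg_nat_sub_mul_Gamma hσ (hpos hs0 hs1)]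
end
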